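/- Let b, d ≥ 2 and m ≥ 1 be integers, N = b^m, and let P = (p^{(n)})_{n=1}^N be any N-point family in [0,1)^d. Let σ be a random map on [0,1)^d of the form σ(x) = (σ_1(x_1), …, σ_d(x_d)) such that almost surely each σ_j : [0,1) → [0,1) is a b-ary scrambling of depth at least 1, and such that each image point σ(p^{(n)}) is uniformly distributed on [0,1)^d. Suppose a set J ⊆ {1, …, N} with |J| = k ≥ 1 and a coordinate j_0 ∈ {1, …, d} and an integer 0 ≤ a < b exist such that p^{(n)}_{j_0} ∈ [a/b, (a+1)/b) for all n ∈ J (such J with k ≥ N/b exists by pigeonhole). Let E_0 = {x ∈ [0,1)^d : x_{j_0} ∈ [0, 1/b)} ∈ C^d_0. Then P(∀ n ∈ J : σ(p^{(n)}) ∈ E_0) = 1/b, while ∏_{n∈J} P(σ(p^{(n)}) ∈ E_0) = b^{−k}; consequently the C^d_0-correlation number of (σ(p^{(n)}))_{n=1}^N is at least b^{k−1} ≥ b^{N/b − 1}. -/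

import Mathlib

open MeasureTheory ProbabilityTheory Filter
open scoped ENNReal Classical

namespace LHSPaper

/-- The anchored box `[0,a) = ∏_i [0, a_i)` in `[0,1)^d`. -/
def anchoredBox {d : ℕ} (a : Fin d → ℝ) : Set (Fin d → ℝ) := {x | ∀ i, x i ∈ Set.Ico 0 (a i)}

/-- `C^d_0`, the collection of anchored boxes `[0,a)` with `a ∈ [0,1]^d`. -/
def anchoredBoxes (d : ℕ) : Set (Set (Fin d → ℝ)) :=
  {S | ∃ a : Fin d → ℝ, (∀ i, a i ∈ Set.Icc (0 : ℝ) 1) ∧ S = anchoredBox a}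

/-- `D^d_0`, the collection of differences `B \ A` of anchored boxes. -/
def boxDiffs (d : ℕ) : Set (Set (Fin d → ℝ)) :=
  {S | ∃ A ∈ anchoredBoxes d, ∃ B ∈ anchoredBoxes d, S = B \ A}

/-- The half-open unit cube `[0,1)^d`. -/
def unitCube (d : ℕ) : Set (Fin d → ℝ) := {x | ∀ i, x i ∈ Set.Ico (0 : ℝ) 1}

/-- `γ`-negative dependence of the indicators of the events `A 1, …, A N`. -/
def GammaNegDep {Ω : Type*} [MeasurableSpace Ω] (μ : Measure Ω) {N : ℕ}
    (γ : ℝ≥0∞) (A : Fin N → Set Ω) : Prop :=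
  ∀ J : Finset (Fin N), J.Nonempty →
    μ (⋂ j ∈ J, A j) ≤ γ * ∏ j ∈ J, μ (A j) ∧
    μ (⋂ j ∈ J, (A j)ᶜ) ≤ γ * ∏ j ∈ J, μ (A j)ᶜ

/-- The `𝒮`-correlation number of a random point tuple `X`. -/
noncomputable def corrNum {Ω : Type*} [MeasurableSpace Ω] (μ : Measure Ω) {N d : ℕ}
    (𝒮 : Set (Set (Fin d → ℝ))) (X : Fin N → Ω → Fin d → ℝ) : ℝ≥0∞ :=
  ⨆ (S : Set (Fin d → ℝ)) (_ : S ∈ 𝒮) (J : Finset (Fin N)) (_ : J.Nonempty),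
    max (μ (⋂ j ∈ J, {ω | X j ω ∈ S}) / ∏ j ∈ J, μ {ω | X j ω ∈ S})
        (μ (⋂ j ∈ J, {ω | X j ω ∉ S}) / ∏ j ∈ J, μ {ω | X j ω ∉ S})

instance (N : ℕ) : MeasurableSpace (Equiv.Perm (Fin N)) := ⊤

instance (N : ℕ) : Nonempty (Equiv.Perm (Fin N)) := ⟨Equiv.refl _⟩

/-- Value types of the sources of randomness of a Latin hypercube sample:
`d` random permutations and `N·d` random reals. -/
def lhsβ (d N : ℕ) : (Fin d ⊕ (Fin N × Fin d)) → Type :=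
  fun i => Sum.elim (fun _ => Equiv.Perm (Fin N)) (fun _ => ℝ) i

noncomputable def lhsMS (d N : ℕ) : (i : Fin d ⊕ (Fin N × Fin d)) → MeasurableSpace (lhsβ d N i) :=
  fun i => match i with
  | .inl _ => ⊤
  | .inr _ => inferInstanceAs (MeasurableSpace ℝ)

def lhsFun {Ω : Type*} {d N : ℕ} (π : Fin d → Ω → Equiv.Perm (Fin N))
    (U : Fin N → Ω → Fin d → ℝ) : (i : Fin d ⊕ (Fin N × Fin d)) → Ω → lhsβ d N i :=
  fun i => match i with
  | .inl j => π j
  | .inr p => fun ω => U p.1 ω p.2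

/-- `X` is a Latin hypercube sample of `N` points in `[0,1)^d`, built from the
uniformly distributed random permutations `π_j` and the uniformly distributed
random variables `U_{n,j}`, all mutually independent. -/
def IsLHS {Ω : Type*} [MeasurableSpace Ω] (μ : Measure Ω) (d N : ℕ)
    (X : Fin N → Ω → Fin d → ℝ)
    (π : Fin d → Ω → Equiv.Perm (Fin N)) (U : Fin N → Ω → Fin d → ℝ) : Prop :=
  (∀ j, Measure.map (π j) μ = (PMF.uniformOfFintype (Equiv.Perm (Fin N))).toMeasure) ∧
  (∀ n j, Measure.map (fun ω => U n ω j) μ = volume.restrict (Set.Ico (0 : ℝ) 1)) ∧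
  iIndepFun (m := lhsMS d N) (lhsFun π U) μ ∧
  (∀ n j ω, X n ω j = (((π j ω) n : ℕ) + U n ω j) / N)

/-- An elementary interval in base `b` of order `k` in `[0,1)^d`. -/
def IsElemInterval (b d k : ℕ) (E : Set (Fin d → ℝ)) : Prop :=
  ∃ ℓ : Fin d → ℕ, ∃ a : Fin d → ℕ, (∀ i, a i < b ^ ℓ i) ∧ (∑ i, ℓ i = k) ∧
    E = {x | ∀ i, x i ∈ Set.Ico ((a i : ℝ) / b ^ ℓ i) (((a i : ℝ) + 1) / b ^ ℓ i)}

/-- A `(t,m,d)`-net in base `b`: `b^m` points in `[0,1)^d` such that every elementary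
interval of order `m - t` contains exactly `b^t` points (with multiplicity). -/
def IsNet (b d m t : ℕ) (P : Fin (b ^ m) → Fin d → ℝ) : Prop :=
  (∀ n, P n ∈ unitCube d) ∧
  ∀ E : Set (Fin d → ℝ), IsElemInterval b d (m - t) E →
    (Finset.univ.filter fun n => P n ∈ E).card = b ^ t

/-- A `b`-ary scrambling of depth `ℓ`: a self-map of `[0,1)` mapping, for each
`k ∈ {1,…,ℓ}`, elementary intervals of order `k` into elementary intervals of order `k`,
distinct ones into distinct ones. -/
def IsScrambling (b ℓ : ℕ) (σ : ℝ → ℝ) : Prop :=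
  (∀ x ∈ Set.Ico (0 : ℝ) 1, σ x ∈ Set.Ico (0 : ℝ) 1) ∧
  ∀ k, 1 ≤ k → k ≤ ℓ → ∃ f : ℕ → ℕ,
    (∀ a < b ^ k, f a < b ^ k) ∧
    (∀ a < b ^ k, ∀ a' < b ^ k, a ≠ a' → f a ≠ f a') ∧
    (∀ a < b ^ k, ∀ x ∈ Set.Ico ((a : ℝ) / b ^ k) (((a : ℝ) + 1) / b ^ k),
      σ x ∈ Set.Ico ((f a : ℝ) / b ^ k) (((f a : ℝ) + 1) / b ^ k))

/-- A basic cube of an abstract scrambled `(t,m,d)`-net in base `b`. -/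
def IsBasicCube (b d m t : ℕ) (C : Set (Fin d → ℝ)) : Prop :=
  ∃ k : Fin d → ℕ, (∀ j, k j < b ^ (m - t)) ∧
    C = {x | ∀ j, x j ∈ Set.Ico ((k j : ℝ) / b ^ (m - t)) (((k j : ℝ) + 1) / b ^ (m - t))}

/-- An abstract scrambled `(t,m,d)`-net in base `b`. -/
def IsAbstractScrambledNet {Ω : Type*} [MeasurableSpace Ω] (μ : Measure Ω)
    (b d m t : ℕ) (Y : Fin (b ^ m) → Ω → (Fin d → ℝ)) : Prop :=
  (∀ᵐ ω ∂μ, IsNet b d m t fun n => Y n ω) ∧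
  (∀ i C, IsBasicCube b d m t C → μ {ω | Y i ω ∈ C} = ((b : ℝ≥0∞) ^ (d * (m - t)))⁻¹) ∧
  (∀ M : Set (Fin d → ℝ), MeasurableSet M →
    ∀ J : Finset (Fin (b ^ m)), J.Nonempty →
    ∀ C : Fin (b ^ m) → Set (Fin d → ℝ), (∀ j ∈ J, IsBasicCube b d m t (C j)) →
      μ (⋂ j ∈ J, {ω | Y j ω ∈ C j}) ≠ 0 →
      (μ[|⋂ j ∈ J, {ω | Y j ω ∈ C j}]) (⋂ j ∈ J, {ω | Y j ω ∈ M}) =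
        ∏ j ∈ J, volume (M ∩ C j) / volume (C j))

/-!
A scrambling of depth at least one maps the first-digit interval `[a/b, (a+1)/b)`, which
contains every `p⁽ⁿ⁾_{j₀}` with `n ∈ J`, into a single first-digit interval. So almost surely
either all or none of the points `σ(p⁽ⁿ⁾)`, `n ∈ J`, lie in `E₀`: the joint probability is the
marginal one, `1/b`, while the product of the marginals is `b^{-|J|}`.
-/

lemma anchoredBox_eq_pi {d : ℕ} (a : Fin d → ℝ) :
    anchoredBox a = Set.univ.pi fun i => Set.Ico 0 (a i) := by
  ext x; simp [anchoredBox]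

lemma measurableSet_anchoredBox {d : ℕ} (a : Fin d → ℝ) : MeasurableSet (anchoredBox a) := by
  rw [anchoredBox_eq_pi]; exact .univ_pi fun _ => measurableSet_Ico

lemma volume_anchoredBox {d : ℕ} (a : Fin d → ℝ) :
    volume (anchoredBox a) = ∏ i, ENNReal.ofReal (a i) := by
  simp [anchoredBox_eq_pi, volume_pi_pi, Real.volume_Ico]

lemma unitCube_eq_anchoredBox (d : ℕ) : unitCube d = anchoredBox 1 := rfl

lemma volume_unitCube (d : ℕ) : volume (unitCube d) = 1 := by
  simp [unitCube_eq_anchoredBox, volume_anchoredBox]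

lemma setOf_mem_unitCube_and_lt_eq_anchoredBox {d : ℕ} (j : Fin d) {c : ℝ} (hc : c ≤ 1) :
    {x | x ∈ unitCube d ∧ x j < c} = anchoredBox (Function.update 1 j c) := by
  ext x
  simp only [Set.mem_ofPred_eq, unitCube, anchoredBox, Set.mem_Ico]
  constructor
  · rintro ⟨hx, hxj⟩ i
    rcases eq_or_ne i j with rfl | hi
    · simpa using ⟨(hx i).1, hxj⟩
    · simpa [hi] using hx i
  · intro hx
    refine ⟨fun i => ?_, by simpa using (hx j).2⟩
    rcases eq_or_ne i j with rfl | hi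
    · have hxi := hx i
      simp only [Function.update_self] at hxi
      exact ⟨hxi.1, hxi.2.trans_le hc⟩
    · simpa [hi] using hx i

lemma anchoredBox_update_mem_anchoredBoxes {d : ℕ} (j : Fin d) {c : ℝ} (hc : c ∈ Set.Icc 0 1) :
    anchoredBox (Function.update 1 j c) ∈ anchoredBoxes d := by
  refine ⟨_, fun i => ?_, rfl⟩
  rcases eq_or_ne i j with rfl | hi
  · simpa using hc
  · simp [hi]

lemma volume_anchoredBox_update {d : ℕ} (j : Fin d) {c : ℝ} :
    volume (anchoredBox (Function.update 1 j c)) = ENNReal.ofReal c := by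
  rw [volume_anchoredBox, Fintype.prod_eq_single j fun i hi => by simp [hi]]
  simp

section UniformPoint

variable {Ω : Type*} [MeasurableSpace Ω] {μ : Measure Ω} {d : ℕ} {X : Ω → Fin d → ℝ}

lemma aemeasurable_of_map_eq_restrict_unitCube
    (hX : μ.map X = volume.restrict (unitCube d)) : AEMeasurable X μ :=
  .of_map_ne_zero <| by simp [hX, volume_unitCube]

lemma ae_mem_unitCube_of_map_eq (hX : μ.map X = volume.restrict (unitCube d)) :
    ∀ᵐ ω ∂μ, X ω ∈ unitCube d :=
  ae_of_ae_map (aemeasurable_of_map_eq_restrict_unitCube hX) <| by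
    rw [hX]; exact ae_restrict_mem (unitCube_eq_anchoredBox d ▸ measurableSet_anchoredBox 1)

lemma measure_mem_of_map_eq (hX : μ.map X = volume.restrict (unitCube d))
    {S : Set (Fin d → ℝ)} (hS : MeasurableSet S) (hSsub : S ⊆ unitCube d) :
    μ {ω | X ω ∈ S} = volume S := by
  rw [show {ω | X ω ∈ S} = X ⁻¹' S from rfl, ← Measure.map_apply_of_aemeasurable
    (aemeasurable_of_map_eq_restrict_unitCube hX) hS, hX, Measure.restrict_apply hS,
    Set.inter_eq_self_of_subset_left hSsub]

end UniformPoint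

lemma IsScrambling.lt_one_div_of_lt_one_div {b ℓ : ℕ} {σ : ℝ → ℝ} (hσ : IsScrambling b ℓ σ) (hℓ : 1 ≤ ℓ)
    {a : ℕ} (ha : a < b) {x y : ℝ} (hx : x ∈ Set.Ico ((a : ℝ) / b) (((a : ℝ) + 1) / b))
    (hy : y ∈ Set.Ico ((a : ℝ) / b) (((a : ℝ) + 1) / b)) (hσx : σ x < 1 / b) :
    σ y < 1 / b := by
  obtain ⟨f, -, -, hf⟩ := hσ.2 1 le_rfl hℓ
  have hb : (0 : ℝ) < b := by exact_mod_cast ha.trans_le' (Nat.zero_le a)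
  have hfx := hf a (by simpa using ha) x (by simpa using hx)
  have hfy := hf a (by simpa using ha) y (by simpa using hy)
  simp only [pow_one] at hfx hfy
  have hfa : f a = 0 := by
    have : (f a : ℝ) / b < 1 / b := hfx.1.trans_lt hσx
    have : (f a : ℝ) < 1 := (div_lt_div_iff_of_pos_right hb).1 this
    exact_mod_cast Nat.lt_one_iff.1 (by exact_mod_cast this)
  simpa [hfa] using hfy.2

lemma measure_biInter_eq_of_ae_imp {Ω ι : Type*} [MeasurableSpace Ω] {μ : Measure Ω}
    {s : ι → Set Ω} {J : Finset ι} {i₀ : ι} (hi₀ : i₀ ∈ J)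
    (h : ∀ᵐ ω ∂μ, ω ∈ s i₀ → ∀ i ∈ J, ω ∈ s i) :
    μ (⋂ i ∈ J, s i) = μ (s i₀) := by
  refine measure_congr <| Filter.eventuallyEq_set.2 ?_
  filter_upwards [h] with ω hω
  simp only [Set.mem_iInter]
  exact ⟨fun h' => h' i₀ hi₀, hω⟩

lemma div_le_corrNum {Ω : Type*} [MeasurableSpace Ω] (μ : Measure Ω) {N d : ℕ}
    {𝒮 : Set (Set (Fin d → ℝ))} (X : Fin N → Ω → Fin d → ℝ) {S : Set (Fin d → ℝ)} (hS : S ∈ 𝒮)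
    {J : Finset (Fin N)} (hJ : J.Nonempty) :
    μ (⋂ j ∈ J, {ω | X j ω ∈ S}) / ∏ j ∈ J, μ {ω | X j ω ∈ S} ≤ corrNum μ 𝒮 X :=
  le_iSup₂_of_le S hS <| le_iSup₂_of_le J hJ <| le_max_left _ _

lemma ENNReal.inv_div_inv_pow {b : ℝ≥0∞} (hb : b ≠ 0) (hb' : b ≠ ⊤) {k : ℕ} (hk : 1 ≤ k) :
    b⁻¹ / b⁻¹ ^ k = b ^ (k - 1) := by
  obtain ⟨k, rfl⟩ := Nat.exists_eq_add_of_le' hk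
  rw [← ENNReal.inv_pow, ENNReal.div_eq_inv_mul, inv_inv, pow_succ, mul_assoc,
    ENNReal.mul_inv_cancel hb hb', mul_one, Nat.add_sub_cancel]

theorem stmt19_general {Ω : Type*} [MeasurableSpace Ω] (μ : Measure Ω) [IsProbabilityMeasure μ]
    (b d m : ℕ)
    (P : Fin (b ^ m) → Fin d → ℝ)
    (σ : Fin d → Ω → ℝ → ℝ)
    (hscr : ∀ᵐ ω ∂μ, ∀ j, ∃ ℓ, 1 ≤ ℓ ∧ IsScrambling b ℓ (σ j ω))
    (hunif : ∀ n, Measure.map (fun ω => fun i => σ i ω (P n i)) μ =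
      volume.restrict (unitCube d))
    (J : Finset (Fin (b ^ m))) (hJ : J.Nonempty)
    (j0 : Fin d) (a : ℕ) (ha : a < b)
    (hPJ : ∀ n ∈ J, P n j0 ∈ Set.Ico ((a : ℝ) / b) (((a : ℝ) + 1) / b))
    (E0 : Set (Fin d → ℝ))
    (hE0 : E0 = {x | x ∈ unitCube d ∧ x j0 < 1 / b}) :
    μ (⋂ n ∈ J, {ω | (fun i => σ i ω (P n i)) ∈ E0}) = (b : ℝ≥0∞)⁻¹ ∧
    (∏ n ∈ J, μ {ω | (fun i => σ i ω (P n i)) ∈ E0}) = (b : ℝ≥0∞)⁻¹ ^ J.card ∧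
    (b : ℝ≥0∞) ^ (J.card - 1) ≤
      corrNum μ (anchoredBoxes d) (fun n ω i => σ i ω (P n i)) := by
  have hb : (0 : ℝ) < b := by exact_mod_cast ha.trans_le' (Nat.zero_le a)
  have hb_inv : 1 / (b : ℝ) ∈ Set.Icc 0 1 :=
    ⟨by positivity, (div_le_one hb).2 (by exact_mod_cast Nat.one_le_of_lt ha)⟩
  have hE0_box : E0 = anchoredBox (Function.update 1 j0 (1 / b)) :=
    hE0 ▸ setOf_mem_unitCube_and_lt_eq_anchoredBox j0 hb_inv.2
  have hmarginal : ∀ n, μ {ω | (fun i => σ i ω (P n i)) ∈ E0} = (b : ℝ≥0∞)⁻¹ := fun n => by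
    rw [measure_mem_of_map_eq (hunif n) (hE0_box ▸ measurableSet_anchoredBox _)
      (hE0 ▸ fun _ hx => hx.1), hE0_box, volume_anchoredBox_update, one_div,
      ENNReal.ofReal_inv_of_pos hb, ENNReal.ofReal_natCast]
  obtain ⟨n0, hn0⟩ := hJ
  have hjoint : μ (⋂ n ∈ J, {ω | (fun i => σ i ω (P n i)) ∈ E0}) = (b : ℝ≥0∞)⁻¹ := by
    rw [measure_biInter_eq_of_ae_imp hn0 ?_, hmarginal]
    have hcube : ∀ᵐ ω ∂μ, ∀ n, (fun i => σ i ω (P n i)) ∈ unitCube d :=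
      ae_all_iff.2 fun n => ae_mem_unitCube_of_map_eq (hunif n)
    filter_upwards [hcube, hscr] with ω hω hσω
    obtain ⟨ℓ, hℓ, hσ⟩ := hσω j0
    subst hE0
    rintro ⟨-, h0⟩ n hn
    exact ⟨hω n, hσ.lt_one_div_of_lt_one_div hℓ ha (hPJ n0 hn0) (hPJ n hn) h0⟩
  have hprod : (∏ n ∈ J, μ {ω | (fun i => σ i ω (P n i)) ∈ E0}) = (b : ℝ≥0∞)⁻¹ ^ J.card := by
    rw [Finset.prod_congr rfl fun n _ => hmarginal n, Finset.prod_const]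
  refine ⟨hjoint, hprod, ?_⟩
  calc (b : ℝ≥0∞) ^ (J.card - 1) = (b : ℝ≥0∞)⁻¹ / (b : ℝ≥0∞)⁻¹ ^ J.card :=
        (ENNReal.inv_div_inv_pow (by exact_mod_cast hb.ne') (ENNReal.natCast_ne_top b)
          (Finset.card_pos.2 ⟨n0, hn0⟩)).symm
    _ = μ (⋂ n ∈ J, {ω | (fun i => σ i ω (P n i)) ∈ E0}) /
          ∏ n ∈ J, μ {ω | (fun i => σ i ω (P n i)) ∈ E0} := by rw [hjoint, hprod]
    _ ≤ corrNum μ (anchoredBoxes d) (fun n ω i => σ i ω (P n i)) :=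
        div_le_corrNum μ _ (hE0_box ▸ anchoredBox_update_mem_anchoredBoxes j0 hb_inv)
          ⟨n0, hn0⟩

/-- For a random coordinatewise `b`-ary scrambling (of depth ≥ 1 a.s.)
of an arbitrary point family `P` whose image points are uniform on `[0,1)^d`, and a set
`J` of indices whose points share the `j₀`-th first digit:
`P(∀ n ∈ J : σ(p⁽ⁿ⁾) ∈ E₀) = 1/b` while `∏_{n∈J} P(σ(p⁽ⁿ⁾) ∈ E₀) = b^{-|J|}`;
hence the `C^d_0`-correlation number of the scrambled points is at least `b^{|J|-1}`. -/
theorem stmt19 {Ω : Type*} [MeasurableSpace Ω] (μ : Measure Ω) [IsProbabilityMeasure μ]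
    (b d m : ℕ) (hb : 2 ≤ b) (hd : 2 ≤ d) (hm : 1 ≤ m)
    (P : Fin (b ^ m) → Fin d → ℝ)
    (σ : Fin d → Ω → ℝ → ℝ)
    (hscr : ∀ᵐ ω ∂μ, ∀ j, ∃ ℓ, 1 ≤ ℓ ∧ IsScrambling b ℓ (σ j ω))
    (hunif : ∀ n, Measure.map (fun ω => fun i => σ i ω (P n i)) μ =
      volume.restrict (unitCube d))
    (J : Finset (Fin (b ^ m))) (hJ : J.Nonempty)
    (j0 : Fin d) (a : ℕ) (ha : a < b)
    (hPJ : ∀ n ∈ J, P n j0 ∈ Set.Ico ((a : ℝ) / b) (((a : ℝ) + 1) / b))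
    (E0 : Set (Fin d → ℝ))
    (hE0 : E0 = {x | x ∈ unitCube d ∧ x j0 < 1 / b}) :
    μ (⋂ n ∈ J, {ω | (fun i => σ i ω (P n i)) ∈ E0}) = (b : ℝ≥0∞)⁻¹ ∧
    (∏ n ∈ J, μ {ω | (fun i => σ i ω (P n i)) ∈ E0}) = (b : ℝ≥0∞)⁻¹ ^ J.card ∧
    (b : ℝ≥0∞) ^ (J.card - 1) ≤
      corrNum μ (anchoredBoxes d) (fun n ω i => σ i ω (P n i)) :=
  stmt19_general μ b d m P σ hscr hunif J hJ j0 a ha hPJ E0 hE0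

end LHSPaper
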